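/- arXiv:2207.11800 — 3 statements merged into one kernel-verified Lean document; each statement's English description precedes it below -/
import Mathlib

section
/- Let k be a field of characteristic p > 0, fix positive integers n and d, let I_d be the set of n-tuples of nonnegative integers summing to d, and let K = k[a_i : i ∈ I_d] be a polynomial ring with one variable for each tuple in I_d. Let f = Σ_{i ∈ I_d} a_i · x_1^{i_1}···x_n^{i_n} be the generic degree d polynomial in K[x_1,...,x_n]. If N is a positive integer with N < p, then for every n-tuple j = (j_1,...,j_n) of nonnegative integers with j_1 + ··· + j_n = N·d, the coefficient of the monomial x_1^{j_1}···x_n^{j_n} in f^N is a nonzero element of K. -/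
open MvPolynomial

/-- The generic homogeneous polynomial of degree `d` in `n` variables: over the polynomial
ring `K = k[a_i : i ∈ I_d]` (with one variable `a_i` for each exponent vector `i` of degree
`d`, realized as variables indexed by `Fin n →₀ ℕ`), it is `Σ_{i ∈ I_d} a_i · x^i`. -/
noncomputable def genericPoly (k : Type*) [Field k] (n d : ℕ) :
    MvPolynomial (Fin n) (MvPolynomial (Fin n →₀ ℕ) k) :=
  ∑ v ∈ Finset.finsuppAntidiag (Finset.univ : Finset (Fin n)) d,
    monomial v (X v : MvPolynomial (Fin n →₀ ℕ) k)

/-!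
The generic form is linear in the coefficient variables `a_v`. Swapping the two sets of
variables, the multinomial theorem shows that the coefficient of `a^κ x^j` in `f^N` is the
multinomial coefficient `N! / ∏ κ_v!` whenever `κ` is a multiset of `N` exponent vectors of
degree `d` with sum `j`. Such a `κ` exists for every `j` of degree `N d` (peel off a
degree-`d` vector `N` times), and its multinomial coefficient divides `N!`, which is prime to
`p` when `N < p`.
-/

namespace MvPolynomial
variable {R σ τ : Type*} [CommSemiring R]

theorem commAlgEquiv_monomial_monomial (u : σ →₀ ℕ) (w : τ →₀ ℕ) (r : R) :
    commAlgEquiv R σ τ (monomial u (monomial w r)) = monomial w (monomial u r) :=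
  AddMonoidAlgebra.commAlgEquiv_single_single ..

theorem coeff_coeff_commAlgEquiv (p : MvPolynomial σ (MvPolynomial τ R)) (s : τ →₀ ℕ)
    (t : σ →₀ ℕ) : coeff t (coeff s (commAlgEquiv R σ τ p)) = coeff s (coeff t p) := by
  classical
  induction p using MvPolynomial.induction_on' with
  | monomial u q =>
    induction q using MvPolynomial.induction_on' with
    | monomial w r =>
      simp only [commAlgEquiv_monomial_monomial, coeff_monomial, apply_ite (coeff t),
        apply_ite (coeff s), coeff_zero]
      grind
    | add q₁ q₂ h₁ h₂ => simp only [map_add, coeff_add, h₁, h₂]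
  | add p₁ p₂ h₁ h₂ => simp only [map_add, coeff_add, h₁, h₂]

theorem commAlgEquiv_sum_monomial_X (A : Finset (σ →₀ ℕ)) :
    commAlgEquiv R σ (σ →₀ ℕ) (∑ v ∈ A, monomial v (X v)) =
      Finsupp.linearCombination (MvPolynomial σ R) X
        (∑ v ∈ A, Finsupp.single v (monomial v 1)) := by
  simp only [map_sum, Finsupp.linearCombination_single, smul_eq_C_mul, X,
    commAlgEquiv_monomial_monomial, C_mul_monomial, mul_one]

theorem coeff_coeff_pow_sum_monomial_X (A : Finset (σ →₀ ℕ)) {N : ℕ}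
    {κ : (σ →₀ ℕ) →₀ ℕ} (hκA : κ.support ⊆ A) (hκN : κ.degree = N) :
    coeff κ (coeff (κ.sum fun v m ↦ m • v)
      ((∑ v ∈ A, monomial v (X v : MvPolynomial (σ →₀ ℕ) R)) ^ N)) = κ.multinomial := by
  classical
  rw [← coeff_coeff_commAlgEquiv, map_pow, commAlgEquiv_sum_monomial_X,
    coeff_linearCombination_X_pow, if_pos (by exact hκN)]
  have hprod : (κ.prod fun v m ↦ (∑ w ∈ A, Finsupp.single w (monomial w (1 : R))) v ^ m) =
      monomial (κ.sum fun v m ↦ m • v) 1 := by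
    rw [Finsupp.sum, monomial_sum_one]
    refine Finset.prod_congr rfl fun v hv ↦ ?_
    simp only [Finsupp.finsetSum_apply, Finsupp.single_apply, Finset.sum_ite_eq',
      if_pos (hκA hv), monomial_pow, one_pow]
  rw [hprod, ← C_eq_coe_nat, coeff_C_mul, coeff_monomial, if_pos rfl, mul_one]

end MvPolynomial

namespace Finsupp
variable {σ : Type*}

theorem exists_sum_smul_eq_of_degree_eq_mul {d : ℕ} :
    ∀ {N : ℕ} {j : σ →₀ ℕ}, j.degree = N * d → ∃ κ : (σ →₀ ℕ) →₀ ℕ,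
      (∀ v ∈ κ.support, v.degree = d) ∧ κ.degree = N ∧ κ.sum (fun v m ↦ m • v) = j
  | 0, j, hj =>
    ⟨0, by simp, by simp, by rw [sum_zero_index, eq_comm, ← degree_eq_zero_iff, hj, zero_mul]⟩
  | N + 1, j, hj => by
    classical
    obtain ⟨v, hvj, hv⟩ :=
      j.exists_le_degree_eq d (by rw [hj]; exact Nat.le_mul_of_pos_left d N.succ_pos)
    obtain ⟨j', rfl⟩ := le_iff_exists_add.mp hvj
    obtain ⟨κ, hκd, hκN, rfl⟩ :=
      exists_sum_smul_eq_of_degree_eq_mul (d := d) (N := N) (j := j')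
        (by rw [map_add, hv, Nat.succ_mul] at hj; omega)
    refine ⟨single v 1 + κ, fun w hw ↦ ?_, ?_, ?_⟩
    · rcases Finset.mem_union.mp (support_add hw) with h | h
      · rw [Finset.mem_singleton.mp (support_single_subset h), hv]
      · exact hκd w h
    · rw [map_add, degree_single, hκN, add_comm]
    · rw [sum_add_index' (fun v ↦ zero_smul ℕ v) (fun v m₁ m₂ ↦ add_smul m₁ m₂ v),
        sum_single_index (zero_smul ℕ v), one_smul]

theorem cast_multinomial_ne_zero {k : Type*} [AddMonoidWithOne k] {p : ℕ} [CharP k p]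
    (hp : p.Prime) {κ : σ →₀ ℕ} (hκ : κ.degree < p) : (κ.multinomial : k) ≠ 0 := by
  rw [Ne, CharP.cast_eq_zero_iff k p]
  intro hdvd
  have : κ.multinomial ∣ κ.degree.factorial := Dvd.intro_left _ (Nat.multinomial_spec _ _)
  exact hκ.not_ge (hp.dvd_factorial.mp (hdvd.trans this))

end Finsupp

theorem coeff_pow_genericPoly_ne_zero_general {k : Type*} [Field k] {p : ℕ} (hp : p.Prime)
    [CharP k p] {n d : ℕ} (N : ℕ) (hNp : N < p)
    (j : Fin n →₀ ℕ) (hj : ∑ t, j t = N * d) :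
    MvPolynomial.coeff j ((genericPoly k n d) ^ N) ≠ 0 := by
  obtain ⟨κ, hκd, hκN, rfl⟩ :=
    Finsupp.exists_sum_smul_eq_of_degree_eq_mul (j := j) (by rwa [Finsupp.degree_eq_sum])
  have hκA : κ.support ⊆ Finset.finsuppAntidiag Finset.univ d := fun v hv ↦
    Finset.mem_finsuppAntidiag.mpr
      ⟨by rw [← Finsupp.degree_eq_sum, hκd v hv], Finset.subset_univ _⟩
  intro h
  apply Finsupp.cast_multinomial_ne_zero (k := k) hp (hκN ▸ hNp)
  rw [← coeff_coeff_pow_sum_monomial_X _ hκA hκN]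
  exact congrArg (coeff κ) h

/-- If `0 < N < p`, then for every exponent vector `j` of total degree `N·d`, the
coefficient of `x^j` in the `N`-th power of the generic degree-`d` polynomial in `n`
variables is nonzero. -/
theorem coeff_pow_genericPoly_ne_zero {k : Type*} [Field k] {p : ℕ} (hp : p.Prime)
    [CharP k p] {n d : ℕ} (hn : 0 < n) (hd : 0 < d) (N : ℕ) (hN : 0 < N) (hNp : N < p)
    (j : Fin n →₀ ℕ) (hj : ∑ t, j t = N * d) :
    MvPolynomial.coeff j ((genericPoly k n d) ^ N) ≠ 0 :=
  coeff_pow_genericPoly_ne_zero_general hp N hNp j hj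
end

section
/- Let k be an algebraically closed field of characteristic p > 0 and let d ≥ 4 be an integer. Write 2p = d·N + r with N a nonnegative integer and 3 ≤ r ≤ d − 1. Suppose i and j are nonnegative integers with i·N < p, j·N < p, and d − 2 ≤ i + j ≤ d − 1. Then for any homogeneous polynomial g ∈ k[x,y] of degree d − i − j that is divisible by neither x nor y, the polynomial f = x^i y^j g satisfies f^N ∉ (x^p, y^p). -/
/-!
Dehomogenizing by `x ↦ t`, `y ↦ 1` sends `f ^ N` to `t ^ (i * N) * G ^ N`, where `G = g(t, 1)`
has degree `e = d - i - j ∈ {1, 2}` and `G(0) ≠ 0`. Membership in `(x^p, y^p)` kills the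
coefficients of `G ^ N` on a window of `r - 1 ≥ e` consecutive indices (or at the index `0`).
On the other hand `H = G ^ N` satisfies the Euler-type identity `G · tH' = N · tG' · H`; read
coefficientwise, and since `e * N < p`, it shows that `e` consecutive vanishing coefficients of
`H` below `e * N` force the preceding one to vanish too, down to `H(0) = G(0) ^ N ≠ 0`.
-/

open MvPolynomial

namespace Polynomial

open Finset

variable {R : Type*} [CommRing R]

theorem coeff_zero_pow (G : R[X]) (N : ℕ) : (G ^ N).coeff 0 = G.coeff 0 ^ N := by
  simp only [coeff_zero_eq_eval_zero, eval_pow]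

theorem coeff_X_mul_derivative (P : R[X]) (n : ℕ) :
    (X * derivative P).coeff n = n * P.coeff n := by
  cases n with
  | zero => simp
  | succ n => rw [coeff_X_mul, coeff_derivative, mul_comm, Nat.cast_succ]

theorem sum_antidiagonal_coeff_mul_coeff_pow (G : R[X]) (N n : ℕ) :
    ∑ x ∈ antidiagonal n, G.coeff x.1 * (G ^ N).coeff x.2 * ((x.2 : R) - N * x.1) = 0 := by
  have euler : G * (X * derivative (G ^ N)) = C (N : R) * ((X * derivative G) * G ^ N) := by
    cases N with
    | zero => simp
    | succ N => rw [derivative_pow_succ]; push_cast; ring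
  have := congrArg (coeff · n) euler
  simp only [coeff_C_mul, coeff_mul G, coeff_mul (X * derivative G), coeff_X_mul_derivative,
    mul_sum] at this
  rw [← sub_eq_zero, ← sum_sub_distrib] at this
  rw [← this]
  exact sum_congr rfl fun x _ => by ring

variable [IsDomain R] {p : ℕ} [CharP R p]

theorem coeff_pow_eq_zero_of_forall_Ioc (G : R[X]) {N s : ℕ} (hp : G.natDegree * N < p)
    (hs : s < G.natDegree * N) (h : ∀ m ∈ Ioc s (s + G.natDegree), (G ^ N).coeff m = 0) :
    (G ^ N).coeff s = 0 := by
  set e := G.natDegree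
  have hsum := sum_antidiagonal_coeff_mul_coeff_pow G N (s + e)
  rw [sum_eq_single_of_mem (e, s) (by simp [add_comm])] at hsum
  · have hG : G ≠ 0 := by
      rintro rfl
      simp [e] at hs
    have hlead : G.coeff e ≠ 0 := leadingCoeff_ne_zero.mpr hG
    have hcast : ((s : R) - N * e) ≠ 0 := by
      rw [← neg_ne_zero, neg_sub, show (N : R) * e = ((e * N : ℕ) : R) by push_cast; ring,
        ← Nat.cast_sub hs.le, Ne, CharP.cast_eq_zero_iff R p]
      exact Nat.not_dvd_of_pos_of_lt (by omega) (by omega)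
    simpa [hcast, hlead] using hsum
  · rintro ⟨a, b⟩ hab hne
    rw [HasAntidiagonal.mem_antidiagonal] at hab
    rcases lt_trichotomy a e with ha | rfl | ha
    · rw [h b (by simp only [mem_Ioc]; omega)]
      simp
    · exact absurd (by rw [Prod.mk.injEq]; omega) hne
    · rw [coeff_eq_zero_of_natDegree_lt ha]
      simp

theorem exists_mem_Ico_coeff_pow_ne_zero (G : R[X]) (hG0 : G.coeff 0 ≠ 0)
    (hdeg : 0 < G.natDegree) {N : ℕ} (hp : G.natDegree * N < p) {s : ℕ}
    (hs : s ≤ G.natDegree * N) : ∃ m ∈ Ico s (s + G.natDegree), (G ^ N).coeff m ≠ 0 := by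
  induction s with
  | zero => exact ⟨0, by simpa using hdeg, by simpa [coeff_zero_pow] using pow_ne_zero N hG0⟩
  | succ s ih =>
    by_contra! hzero
    obtain ⟨m, hm, hne⟩ := ih (by omega)
    rw [mem_Ico] at hm
    obtain rfl | hsm := eq_or_lt_of_le hm.1
    · refine hne (coeff_pow_eq_zero_of_forall_Ioc G hp (by omega) fun m' hm' => hzero m' ?_)
      simp only [mem_Ioc, mem_Ico] at hm' ⊢
      omega
    · exact hne (hzero m (by simp only [mem_Ico]; omega))

end Polynomial

namespace MvPolynomial

theorem X_dvd_iff_forall_mem_support {R σ : Type*} [CommSemiring R] {i : σ}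
    {q : MvPolynomial σ R} : X i ∣ q ↔ ∀ m ∈ q.support, m i ≠ 0 := by
  rw [← Ideal.mem_span_singleton, ← Set.image_singleton, mem_ideal_span_X_image]
  simp

theorem coeff_eq_zero_of_mem_span_X_pow {R σ : Type*} [CommSemiring R] {i j : σ} {a b : ℕ}
    {q : MvPolynomial σ R} (hq : q ∈ Ideal.span {X i ^ a, X j ^ b}) {m : σ →₀ ℕ}
    (hi : m i < a) (hj : m j < b) : q.coeff m = 0 := by
  have hspan : ({X i ^ a, X j ^ b} : Set (MvPolynomial σ R)) =
      (fun s => monomial s 1) '' {Finsupp.single i a, Finsupp.single j b} := by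
    simp [Set.image_pair, X_pow_eq_monomial]
  rw [hspan, mem_ideal_span_monomial_image] at hq
  by_contra hm
  obtain ⟨s, hs, hle⟩ := hq m (mem_support_iff.mpr hm)
  rcases hs with rfl | rfl
  · simpa using (hle i).trans_lt hi
  · simpa using (hle j).trans_lt hj

variable {R : Type*} [CommSemiring R] {q : MvPolynomial (Fin 2) R} {n : ℕ}

noncomputable def dehomogenize : MvPolynomial (Fin 2) R →ₐ[R] Polynomial R :=
  aeval ![Polynomial.X, 1]

namespace IsHomogeneous

theorem apply_zero_add_apply_one (hq : q.IsHomogeneous n) {m : Fin 2 →₀ ℕ}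
    (hm : m ∈ q.support) : m 0 + m 1 = n := by
  simpa [Finsupp.weight_apply, Finsupp.sum_fintype, Fin.sum_univ_two] using
    hq (mem_support_iff.mp hm)

theorem coeff_dehomogenize (hq : q.IsHomogeneous n) {m : Fin 2 →₀ ℕ} (hm : m 0 + m 1 = n) :
    (dehomogenize q).coeff (m 0) = q.coeff m := by
  conv_rhs => rw [← Polynomial.homogenize_eq_of_isHomogeneous hq rfl]
  rw [Polynomial.coeff_homogenize, if_pos hm, dehomogenize]

theorem natDegree_dehomogenize_le (hq : q.IsHomogeneous n) :
    (dehomogenize q).natDegree ≤ n := by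
  rw [dehomogenize, q.as_sum, map_sum]
  refine Polynomial.natDegree_sum_le_of_forall_le _ _ fun m hm => ?_
  rw [aeval_monomial, Finsupp.prod_fintype _ _ (by simp), Fin.prod_univ_two]
  simp only [Matrix.cons_val_zero, Matrix.cons_val_one, one_pow, mul_one,
    ← Polynomial.C_eq_algebraMap]
  have := hq.apply_zero_add_apply_one hm
  exact (Polynomial.natDegree_C_mul_X_pow_le _ _).trans (by omega)

theorem coeff_zero_dehomogenize_ne_zero (hq : q.IsHomogeneous n) (h : ¬X 0 ∣ q) :
    (dehomogenize q).coeff 0 ≠ 0 := by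
  simp only [X_dvd_iff_forall_mem_support, not_forall, not_not] at h
  obtain ⟨m, hm, hm0⟩ := h
  rw [← hm0, hq.coeff_dehomogenize (hq.apply_zero_add_apply_one hm)]
  exact mem_support_iff.mp hm

theorem natDegree_dehomogenize (hq : q.IsHomogeneous n) (h : ¬X 1 ∣ q) :
    (dehomogenize q).natDegree = n := by
  simp only [X_dvd_iff_forall_mem_support, not_forall, not_not] at h
  obtain ⟨m, hm, hm1⟩ := h
  have hm0 : m 0 = n := by simpa [hm1] using hq.apply_zero_add_apply_one hm
  refine hq.natDegree_dehomogenize_le.antisymm (Polynomial.le_natDegree_of_ne_zero ?_)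
  rw [← hm0, hq.coeff_dehomogenize (hq.apply_zero_add_apply_one hm)]
  exact mem_support_iff.mp hm

theorem coeff_dehomogenize_eq_zero_of_mem_span (hq : q.IsHomogeneous n) {p : ℕ}
    (hmem : q ∈ Ideal.span {X 0 ^ p, X 1 ^ p}) {a : ℕ} (ha : a < p) (hna : n - a < p) :
    (dehomogenize q).coeff a = 0 := by
  rcases le_or_gt a n with han | han
  · obtain ⟨m, hm0, hm1⟩ : ∃ m : Fin 2 →₀ ℕ, m 0 = a ∧ m 1 = n - a :=
      ⟨Finsupp.equivFunOnFinite.symm ![a, n - a], rfl, rfl⟩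
    rw [← hm0, hq.coeff_dehomogenize (by omega)]
    exact coeff_eq_zero_of_mem_span_X_pow hmem (by omega) (by omega)
  · exact Polynomial.coeff_eq_zero_of_natDegree_lt (hq.natDegree_dehomogenize_le.trans_lt han)

end IsHomogeneous

end MvPolynomial

theorem pow_not_mem_frobenius_general {k : Type*} [Field k] {p : ℕ}
    [CharP k p] {d N r : ℕ} (hd : 4 ≤ d)
    (h2p : 2 * p = d * N + r) (hr3 : 3 ≤ r)
    {i j : ℕ} (hi : i * N < p) (hj : j * N < p)
    (hij1 : d - 2 ≤ i + j) (hij2 : i + j ≤ d - 1)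
    (g : MvPolynomial (Fin 2) k) (hg : g.IsHomogeneous (d - i - j))
    (hgx : ¬ (X 0 : MvPolynomial (Fin 2) k) ∣ g)
    (hgy : ¬ (X 1 : MvPolynomial (Fin 2) k) ∣ g) :
    ((X 0 : MvPolynomial (Fin 2) k) ^ i * (X 1 : MvPolynomial (Fin 2) k) ^ j * g) ^ N ∉
      Ideal.span {(X 0 : MvPolynomial (Fin 2) k) ^ p, (X 1 : MvPolynomial (Fin 2) k) ^ p} := by
  intro hmem
  set e := d - i - j
  set G := dehomogenize g
  have hdN : d * N = i * N + j * N + e * N := by rw [← add_mul, ← add_mul]; congr 1; omega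
  have he : e * N ≤ 2 * N := Nat.mul_le_mul_right N (by omega)
  have h4 : 4 * N ≤ d * N := Nat.mul_le_mul_right N hd
  have hf : ((X 0 ^ i * X 1 ^ j * g) ^ N).IsHomogeneous (d * N) := by
    convert ((((isHomogeneous_X k 0).pow i).mul ((isHomogeneous_X k 1).pow j)).mul hg).pow N
      using 2
    omega
  have hdeh : dehomogenize ((X 0 ^ i * X 1 ^ j * g) ^ N) = Polynomial.X ^ (i * N) * G ^ N := by
    simp [dehomogenize, G, mul_pow, pow_mul]
  have hvanish : ∀ a, i * N + a < p → d * N - (i * N + a) < p → (G ^ N).coeff a = 0 := by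
    intro a h1 h2
    have := hf.coeff_dehomogenize_eq_zero_of_mem_span hmem h1 h2
    rwa [hdeh, add_comm, Polynomial.coeff_X_pow_mul] at this
  have hG0 : G.coeff 0 ≠ 0 := hg.coeff_zero_dehomogenize_ne_zero hgx
  have hGdeg : G.natDegree = e := hg.natDegree_dehomogenize hgy
  by_cases hlow : j * N + e * N < p
  · exact pow_ne_zero N hG0 (G.coeff_zero_pow N ▸ hvanish 0 (by omega) (by omega))
  · -- `s` below is the least `a` whose monomial `x ^ (i * N + a) * y ^ (d * N - i * N - a)`
    -- has `y`-exponent below `p`.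
    obtain ⟨m, hm, hne⟩ := G.exists_mem_Ico_coeff_pow_ne_zero hG0 (by omega) (N := N) (p := p)
      (by rw [hGdeg]; omega) (s := j * N + e * N + 1 - p) (by rw [hGdeg]; omega)
    rw [Finset.mem_Ico, hGdeg] at hm
    exact hne (hvanish m (by omega) (by omega))

/-- Lemma: fix a prime `p` and `d ≥ 4`, and write `2p = d·N + r` with `N ≥ 0` and
`3 ≤ r ≤ d − 1`. Suppose `i, j ≥ 0` satisfy `i·N < p`, `j·N < p` and
`d − 2 ≤ i + j ≤ d − 1`. Then for any homogeneous `g ∈ k[x,y]` of degree `d − i − j`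
divisible by neither `x` nor `y`, the polynomial `f = x^i y^j g` satisfies
`f^N ∉ (x^p, y^p)`. -/
theorem pow_not_mem_frobenius {k : Type*} [Field k] [IsAlgClosed k] {p : ℕ}
    (hp : p.Prime) [CharP k p] {d N r : ℕ} (hd : 4 ≤ d)
    (h2p : 2 * p = d * N + r) (hr3 : 3 ≤ r) (hrd : r ≤ d - 1)
    {i j : ℕ} (hi : i * N < p) (hj : j * N < p)
    (hij1 : d - 2 ≤ i + j) (hij2 : i + j ≤ d - 1)
    (g : MvPolynomial (Fin 2) k) (hg : g.IsHomogeneous (d - i - j))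
    (hgx : ¬ (X 0 : MvPolynomial (Fin 2) k) ∣ g)
    (hgy : ¬ (X 1 : MvPolynomial (Fin 2) k) ∣ g) :
    ((X 0 : MvPolynomial (Fin 2) k) ^ i * (X 1 : MvPolynomial (Fin 2) k) ^ j * g) ^ N ∉
      Ideal.span {(X 0 : MvPolynomial (Fin 2) k) ^ p, (X 1 : MvPolynomial (Fin 2) k) ^ p} :=
  pow_not_mem_frobenius_general hd h2p hr3 hi hj hij1 hij2 g hg hgx hgy
end

section
/- Let k be an algebraically closed field of characteristic p > 0, let n ≥ 2, let e ≥ 1, and let d be an integer with p^e + 1 ≤ d ≤ 2p^e. Then there exists a squarefree homogeneous polynomial f of degree d in k[x_1,...,x_n] with fpt(f) = 1/p^e. -/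
open MvPolynomial

/-- The Frobenius power `m^{[p^e]} = (x_1^{p^e}, ..., x_n^{p^e})` of the maximal ideal
`m = (x_1, ..., x_n)` in `k[x_1, ..., x_n]`. -/
noncomputable def frobeniusPower (k : Type*) [Field k] (n : ℕ) (p e : ℕ) :
    Ideal (MvPolynomial (Fin n) k) :=
  Ideal.span (Set.range fun i : Fin n => (X i : MvPolynomial (Fin n) k) ^ p ^ e)

/-- The F-pure threshold of `f ∈ k[x_1, ..., x_n]`:
`fpt(f) = sup { N / p^e : f^N ∉ m^{[p^e]} }`. -/
noncomputable def fpt {k : Type*} [Field k] {n : ℕ} (p : ℕ)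
    (f : MvPolynomial (Fin n) k) : ℝ :=
  sSup {r : ℝ | ∃ N e : ℕ, f ^ N ∉ frobeniusPower k n p e ∧ r = (N : ℝ) / (p : ℝ) ^ e}

/-! The witness is `x₀^a (x₀^c - x₁^c)` with `a ≤ 1`, `a + c = d`, `p^e ≤ c < 2p^e` and `p ∤ c`
(take `a = 1` exactly when `p ∣ d`). It lies in `m^{[p^e]}`, so applying Frobenius gives
`f^N ∈ m^{[p^s]}` as soon as `N/p^s > 1/p^e`, i.e. `fpt f ≤ 1/p^e`. Conversely, in characteristic
`p` one has `(x - y)^(p^t - 1) = ∑ x^l y^(p^t - 1 - l)`, so each monomial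
`x₀^(a(p^t - 1) + cl) x₁^(c(p^t - 1 - l))` occurs in `f^(p^t - 1)` with coefficient `1`; because
`c < 2p^e`, one of them has both exponents below `p^(t+e)`. Hence
`(p^t - 1)/p^(t+e) ≤ fpt f` for all `t`, and letting `t → ∞` gives `fpt f = 1/p^e`.
Squarefreeness comes from `∂f/∂x₀`, a unit times a power of `x₀` since `p ∤ c`. -/

open Filter Topology

section FrobeniusPower

variable {k : Type*} [Field k] {n p : ℕ}

theorem mem_frobeniusPower_iff {e : ℕ} {g : MvPolynomial (Fin n) k} :
    g ∈ frobeniusPower k n p e ↔ ∀ μ ∈ g.support, ∃ i, p ^ e ≤ μ i := by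
  have hgen : Set.range (fun i : Fin n => (X i : MvPolynomial (Fin n) k) ^ p ^ e)
      = (fun s => monomial s 1) '' Set.range (fun i => Finsupp.single i (p ^ e)) := by
    rw [← Set.range_comp]
    simp only [Function.comp_def, X_pow_eq_monomial]
  rw [frobeniusPower, hgen, mem_ideal_span_monomial_image]
  simp [Finsupp.single_le_iff]

theorem X_pow_mem_frobeniusPower {e m : ℕ} (i : Fin n) (h : p ^ e ≤ m) :
    (X i : MvPolynomial (Fin n) k) ^ m ∈ frobeniusPower k n p e := by
  rw [← Nat.add_sub_cancel' h, pow_add]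
  exact Ideal.mul_mem_right _ _ (Ideal.subset_span ⟨i, rfl⟩)

theorem frobeniusPower_anti (hp : 0 < p) {s e : ℕ} (h : s ≤ e) :
    frobeniusPower k n p e ≤ frobeniusPower k n p s :=
  Ideal.span_le.mpr <| Set.range_subset_iff.mpr fun i =>
    X_pow_mem_frobeniusPower i (Nat.pow_le_pow_right hp h)

variable [ExpChar k p] {f : MvPolynomial (Fin n) k} {e : ℕ}

theorem pow_pow_mem_frobeniusPower (hf : f ∈ frobeniusPower k n p e) (t : ℕ) :
    f ^ p ^ t ∈ frobeniusPower k n p (e + t) := by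
  have hmap := Ideal.mem_map_of_mem (iterateFrobenius (MvPolynomial (Fin n) k) p t) hf
  rw [frobeniusPower, Ideal.map_span, ← Set.range_comp] at hmap
  simpa [frobeniusPower, Function.comp_def, iterateFrobenius_def, ← pow_mul, ← pow_add] using hmap

theorem pow_mem_frobeniusPower_of_lt (hf : f ∈ frobeniusPower k n p e) {N s : ℕ}
    (h : p ^ s < N * p ^ e) : f ^ N ∈ frobeniusPower k n p s := by
  have hp := expChar_pos k p
  rcases le_or_gt s e with hse | hes
  · obtain ⟨N, rfl⟩ := Nat.exists_eq_add_one_of_ne_zero (n := N) (by rintro rfl; simp at h)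
    rw [pow_succ]
    exact Ideal.mul_mem_left _ _ (frobeniusPower_anti hp hse hf)
  · obtain ⟨t, rfl⟩ := Nat.exists_eq_add_of_lt hes
    have htN : p ^ (t + 1) ≤ N := by
      rw [add_assoc, pow_add, mul_comm] at h
      exact (Nat.lt_of_mul_lt_mul_right h).le
    rw [← Nat.add_sub_cancel' htN, pow_add, add_assoc]
    exact Ideal.mul_mem_right _ _ (pow_pow_mem_frobeniusPower hf _)

theorem div_pow_le_of_pow_notMem_frobeniusPower (hf : f ∈ frobeniusPower k n p e) {N s : ℕ}
    (hN : f ^ N ∉ frobeniusPower k n p s) : (N : ℝ) / p ^ s ≤ 1 / p ^ e := by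
  have hp : (0 : ℝ) < p := by exact_mod_cast expChar_pos k p
  have hle : N * p ^ e ≤ p ^ s := not_lt.mp fun h => hN (pow_mem_frobeniusPower_of_lt hf h)
  rw [div_le_div_iff₀ (by positivity) (by positivity), one_mul]
  exact_mod_cast hle

theorem fpt_le_of_mem_frobeniusPower (hf : f ∈ frobeniusPower k n p e) :
    fpt p f ≤ 1 / p ^ e :=
  Real.sSup_le (by rintro _ ⟨N, s, hN, rfl⟩; exact div_pow_le_of_pow_notMem_frobeniusPower hf hN)
    (by positivity)

theorem fpt_eq_of_mem_frobeniusPower (hp : 1 < p) (hf : f ∈ frobeniusPower k n p e)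
    (hnot : ∀ t, f ^ (p ^ t - 1) ∉ frobeniusPower k n p (t + e)) : fpt p f = 1 / p ^ e := by
  refine le_antisymm (fpt_le_of_mem_frobeniusPower hf) ?_
  have hbdd : BddAbove {r : ℝ | ∃ N s : ℕ, f ^ N ∉ frobeniusPower k n p s ∧ r = N / p ^ s} :=
    ⟨1 / p ^ e, by rintro _ ⟨N, s, hN, rfl⟩; exact div_pow_le_of_pow_notMem_frobeniusPower hf hN⟩
  have hp' : (1 : ℝ) < p := by exact_mod_cast hp
  have hterm (t : ℕ) : ((p ^ t - 1 : ℕ) : ℝ) / p ^ (t + e) = 1 / p ^ e - (p : ℝ)⁻¹ ^ t / p ^ e := by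
    rw [Nat.cast_sub (Nat.one_le_pow _ _ (by omega)), pow_add, inv_pow]
    field_simp
    push_cast
    ring
  have hlim : Tendsto (fun t : ℕ => 1 / (p : ℝ) ^ e - (p : ℝ)⁻¹ ^ t / p ^ e) atTop
      (𝓝 (1 / p ^ e)) := by
    simpa using tendsto_const_nhds.sub ((tendsto_pow_atTop_nhds_zero_of_lt_one
      (by positivity) (inv_lt_one_of_one_lt₀ hp')).div_const ((p : ℝ) ^ e))
  refine le_of_tendsto' hlim fun t => ?_
  rw [← hterm]
  exact le_csSup hbdd ⟨_, _, hnot t, rfl⟩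

end FrobeniusPower

theorem sub_pow_expChar_pow_sub_one {R : Type*} [CommRing R] [IsDomain R] {p : ℕ} [ExpChar R p]
    {x y : R} (hxy : x ≠ y) (t : ℕ) :
    (x - y) ^ (p ^ t - 1) = ∑ l ∈ Finset.range (p ^ t), x ^ l * y ^ (p ^ t - 1 - l) := by
  refine mul_right_cancel₀ (sub_ne_zero.mpr hxy) ?_
  rw [← pow_succ, Nat.sub_add_cancel (Nat.one_le_pow _ _ (expChar_pos R p)), sub_pow_expChar_pow,
    geom_sum₂_mul]

section

variable {σ R : Type*} [CommRing R] {i j : σ}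

theorem X_pow_ne_X_pow [Nontrivial R] (hij : i ≠ j) {c : ℕ} (hc : c ≠ 0) :
    (X i ^ c : MvPolynomial σ R) ≠ X j ^ c := by
  rw [X_pow_eq_monomial, X_pow_eq_monomial, Ne, monomial_left_inj one_ne_zero,
    Finsupp.single_left_inj hc]
  exact hij

theorem coeff_X_pow_mul_X_pow_sub_X_pow_pow [IsDomain R] {p : ℕ} [ExpChar R p] (hij : i ≠ j)
    (a : ℕ) {c : ℕ} (hc : c ≠ 0) {t l : ℕ} (hl : l < p ^ t) :
    coeff (Finsupp.single i (a * (p ^ t - 1) + c * l) + Finsupp.single j (c * (p ^ t - 1 - l)))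
      ((X i ^ a * (X i ^ c - X j ^ c) : MvPolynomial σ R) ^ (p ^ t - 1)) = 1 := by
  classical
  have hterm (m : ℕ) : (X i ^ a : MvPolynomial σ R) ^ (p ^ t - 1) *
      ((X i ^ c) ^ m * (X j ^ c) ^ (p ^ t - 1 - m)) =
        monomial (Finsupp.single i (a * (p ^ t - 1) + c * m) +
          Finsupp.single j (c * (p ^ t - 1 - m))) 1 := by
    rw [← one_mul (1 : R), ← monomial_mul, ← X_pow_eq_monomial, ← X_pow_eq_monomial]
    ring
  rw [mul_pow, sub_pow_expChar_pow_sub_one (X_pow_ne_X_pow hij hc), Finset.mul_sum, coeff_sum,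
    Finset.sum_eq_single l]
  · rw [hterm, coeff_monomial, if_pos rfl]
  · intro m _ hml
    rw [hterm, coeff_monomial, if_neg]
    intro h
    exact hml (by simpa [hij, hc] using DFunLike.congr_fun h i)
  · simp [hl]

end

theorem Nat.exists_le_add_mul_lt_and_mul_sub_lt {A c M V : ℕ} (hc : 0 < c) (hA : A < V)
    (h : A + c * (M + 1) < 2 * V) : ∃ l ≤ M, A + c * l < V ∧ c * (M - l) < V := by
  have hdiv : c * ((V - 1) / c) ≤ V - 1 := Nat.mul_div_le _ _
  have hdiv' : V - 1 < c * ((V - 1) / c + 1) := Nat.lt_mul_div_succ _ hc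
  rcases le_total M ((V - 1) / c) with hM | hM
  · refine ⟨0, Nat.zero_le _, by omega, ?_⟩
    rw [Nat.sub_zero]
    have := Nat.mul_le_mul_left c hM
    omega
  · refine ⟨M - (V - 1) / c, Nat.sub_le _ _, ?_, ?_⟩
    · rw [Nat.mul_sub]
      rw [Nat.mul_add] at h hdiv'
      have := Nat.mul_le_mul_left c hM
      omega
    · rw [Nat.sub_sub_self hM]
      omega

section

variable {k : Type*} [Field k] {n p : ℕ} [ExpChar k p]

theorem X_pow_mul_X_pow_sub_X_pow_pow_notMem_frobeniusPower {i j : Fin n} (hij : i ≠ j)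
    {a c e : ℕ} (ha : a ≤ 1) (hqc : p ^ e ≤ c) (hc : c < 2 * p ^ e) (t : ℕ) :
    (X i ^ a * (X i ^ c - X j ^ c) : MvPolynomial (Fin n) k) ^ (p ^ t - 1) ∉
      frobeniusPower k n p (t + e) := by
  have hpt : 1 ≤ p ^ t := Nat.one_le_pow _ _ (expChar_pos k p)
  have hqe : 1 ≤ p ^ e := Nat.one_le_pow _ _ (expChar_pos k p)
  have hV : p ^ (t + e) = p ^ e * (p ^ t - 1 + 1) := by
    rw [pow_add, mul_comm, Nat.sub_add_cancel hpt]
  obtain ⟨l, hlM, hi, hj⟩ := Nat.exists_le_add_mul_lt_and_mul_sub_lt (A := a * (p ^ t - 1))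
    (c := c) (M := p ^ t - 1) (V := p ^ (t + e)) (by omega) (by rw [hV]; nlinarith) (by
      rw [hV]; nlinarith [Nat.mul_le_mul_right (p ^ t - 1 + 1) (show c + 1 ≤ 2 * p ^ e by omega)])
  intro hmem
  obtain ⟨i', hi'⟩ := mem_frobeniusPower_iff.mp hmem
    (Finsupp.single i (a * (p ^ t - 1) + c * l) + Finsupp.single j (c * (p ^ t - 1 - l)))
    (mem_support_iff.mpr <| by
      rw [coeff_X_pow_mul_X_pow_sub_X_pow_pow hij a (by omega) (by omega : l < p ^ t)]
      exact one_ne_zero)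
  rw [Finsupp.add_apply, Finsupp.single_apply, Finsupp.single_apply] at hi'
  split_ifs at hi' <;> omega

theorem fpt_X_pow_mul_X_pow_sub_X_pow (hp : 1 < p) {i j : Fin n} (hij : i ≠ j)
    {a c e : ℕ} (ha : a ≤ 1) (hqc : p ^ e ≤ c) (hc : c < 2 * p ^ e) :
    fpt p (X i ^ a * (X i ^ c - X j ^ c) : MvPolynomial (Fin n) k) = 1 / p ^ e :=
  fpt_eq_of_mem_frobeniusPower hp
    (Ideal.mul_mem_left _ _ <| Ideal.sub_mem _ (X_pow_mem_frobeniusPower i hqc)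
      (X_pow_mem_frobeniusPower j hqc))
    (X_pow_mul_X_pow_sub_X_pow_pow_notMem_frobeniusPower hij ha hqc hc)

end

section Squarefree

variable {σ : Type*} {i j : σ}

theorem MvPolynomial.dvd_pderiv_of_mul_self_dvd {R : Type*} [CommRing R]
    {f g : MvPolynomial σ R} (h : g * g ∣ f) (i : σ) : g ∣ pderiv i f := by
  obtain ⟨r, rfl⟩ := h
  exact ⟨2 * pderiv i g * r + g * pderiv i r, by rw [pderiv_mul, pderiv_mul]; ring⟩

theorem X_not_dvd_X_pow_sub_X_pow {R : Type*} [CommRing R] [Nontrivial R] (hij : i ≠ j) {c : ℕ}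
    (hc : c ≠ 0) : ¬X i ∣ (X i ^ c - X j ^ c : MvPolynomial σ R) := by
  classical
  rintro ⟨r, hr⟩
  have := congrArg (coeff (Finsupp.single j c)) hr
  simp [coeff_X_mul', coeff_X_pow, hij, hc, Finsupp.single_left_inj hc] at this

variable {k : Type*} [Field k]

theorem squarefree_X_pow_sub_X_pow (hij : i ≠ j) {c : ℕ} (hc : (c : k) ≠ 0) :
    Squarefree (X i ^ c - X j ^ c : MvPolynomial σ k) := by
  have hc0 : c ≠ 0 := by rintro rfl; exact hc Nat.cast_zero
  intro g hg
  have hgX : g ∣ X i ^ (c - 1) := by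
    have := dvd_pderiv_of_mul_self_dvd hg i
    simp only [map_sub, Derivation.leibniz_pow, pderiv_X_self, smul_eq_mul, mul_one, nsmul_eq_mul,
      pderiv_X_of_ne hij.symm, mul_zero, sub_zero] at this
    rwa [← map_natCast C, ((isUnit_iff_ne_zero.mpr hc).map C).dvd_mul_left] at this
  obtain ⟨r, -, hr⟩ := (dvd_prime_pow X_prime _).mp hgX
  rcases Nat.eq_zero_or_pos r with rfl | hr0
  · exact associated_one_iff_isUnit.mp (pow_zero (X i : MvPolynomial σ k) ▸ hr)
  · have hXf : X i ∣ (X i ^ c - X j ^ c : MvPolynomial σ k) :=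
      (dvd_pow_self _ hr0.ne').trans (hr.symm.dvd.trans ((dvd_mul_left g g).trans hg))
    exact absurd hXf (X_not_dvd_X_pow_sub_X_pow hij hc0)

theorem squarefree_X_pow_mul_X_pow_sub_X_pow (hij : i ≠ j) {a c : ℕ} (ha : a ≤ 1)
    (hc : (c : k) ≠ 0) : Squarefree (X i ^ a * (X i ^ c - X j ^ c) : MvPolynomial σ k) := by
  have hc0 : c ≠ 0 := by rintro rfl; exact hc Nat.cast_zero
  have hsq := squarefree_X_pow_sub_X_pow hij hc
  interval_cases a
  · rwa [pow_zero, one_mul]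
  · rw [pow_one, squarefree_mul_iff]
    exact ⟨X_prime.irreducible.isRelPrime_iff_not_dvd.mpr (X_not_dvd_X_pow_sub_X_pow hij hc0),
      X_prime.squarefree, hsq⟩

end Squarefree

theorem exists_exponents_of_pow_lt_le_two_mul_pow {p e d : ℕ} (hp : p.Prime) (he : 1 ≤ e)
    (hd1 : p ^ e + 1 ≤ d) (hd2 : d ≤ 2 * p ^ e) :
    ∃ a c, a ≤ 1 ∧ a + c = d ∧ p ^ e ≤ c ∧ c < 2 * p ^ e ∧ ¬p ∣ c := by
  by_cases hpd : p ∣ d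
  · refine ⟨1, d - 1, le_rfl, by omega, by omega, by omega, fun hpc => hp.one_lt.ne' ?_⟩
    exact Nat.dvd_one.mp (by simpa [show d - (d - 1) = 1 by omega] using Nat.dvd_sub hpd hpc)
  · refine ⟨0, d, zero_le_one, zero_add d, by omega, lt_of_le_of_ne hd2 ?_, hpd⟩
    rintro rfl
    exact hpd (dvd_mul_of_dvd_right (dvd_pow_self p (by omega)) 2)

theorem exists_reduced_fpt_eq_one_div_pe_general {k : Type*} [Field k] {p : ℕ}
    (hp : p.Prime) [CharP k p] {n : ℕ} (hn : 2 ≤ n) {e : ℕ} (he : 1 ≤ e)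
    {d : ℕ} (hd1 : p ^ e + 1 ≤ d) (hd2 : d ≤ 2 * p ^ e) :
    ∃ f : MvPolynomial (Fin n) k, Squarefree f ∧ f.IsHomogeneous d ∧
      fpt p f = 1 / (p : ℝ) ^ e := by
  obtain ⟨a, c, ha, rfl, hqc, hc, hpc⟩ := exists_exponents_of_pow_lt_le_two_mul_pow hp he hd1 hd2
  have : ExpChar k p := ExpChar.prime hp
  have hij : (⟨0, by omega⟩ : Fin n) ≠ ⟨1, by omega⟩ := by simp
  exact ⟨_, squarefree_X_pow_mul_X_pow_sub_X_pow hij ha (by rwa [Ne, CharP.cast_eq_zero_iff k p]),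
    (isHomogeneous_X_pow _ a).mul ((isHomogeneous_X_pow _ c).sub (isHomogeneous_X_pow _ c)),
    fpt_X_pow_mul_X_pow_sub_X_pow hp.one_lt hij ha hqc hc⟩

/-- Corollary (sharpness of the lower bound): for `n ≥ 2`, `e ≥ 1` and
`p^e + 1 ≤ d ≤ 2p^e`, there exists a squarefree homogeneous polynomial `f` of degree `d`
in `n` variables with `fpt(f) = 1/p^e`. -/
theorem exists_reduced_fpt_eq_one_div_pe {k : Type*} [Field k] [IsAlgClosed k] {p : ℕ}
    (hp : p.Prime) [CharP k p] {n : ℕ} (hn : 2 ≤ n) {e : ℕ} (he : 1 ≤ e)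
    {d : ℕ} (hd1 : p ^ e + 1 ≤ d) (hd2 : d ≤ 2 * p ^ e) :
    ∃ f : MvPolynomial (Fin n) k, Squarefree f ∧ f.IsHomogeneous d ∧
      fpt p f = 1 / (p : ℝ) ^ e :=
  exists_reduced_fpt_eq_one_div_pe_general hp hn he hd1 hd2
end
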